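/- Let ψ ∈ C¹([a,b]) be real-valued and suppose the set {t ∈ [a,b] : ψ'(t) = 0} has Lebesgue measure zero. Then for every g ∈ L¹(a,b), ∫_a^b g(t) e^{iτψ(t)} dt → 0 as τ → +∞. -/

import Mathlib

open MeasureTheory
open scoped NNReal ENNReal

open Set Filter Complex in
/-- Preimage of a null set under a `C¹` map, intersected with the non-critical points,
is null. -/
lemma rl_null_preimage (a b : ℝ) (φ : ℝ → ℝ) (hφm : Continuous φ)
    (hdiff : ∀ t ∈ Set.Ioo a b, HasDerivAt φ (deriv φ t) t)
    (hcont : ContinuousOn (deriv φ) (Set.Ioo a b))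
    (E : Set ℝ) (hE : MeasurableSet E) (hE0 : volume E = 0) :
    volume {t ∈ Set.Ioo a b | deriv φ t ≠ 0 ∧ φ t ∈ E} = 0 := by
  classical
  set N : Set ℝ := {t ∈ Set.Ioo a b | deriv φ t ≠ 0 ∧ φ t ∈ E} with hN
  have hNmeas : MeasurableSet N := by
    have hNe : N = (Set.Ioo a b ∩ (deriv φ) ⁻¹' ({0}ᶜ)) ∩ φ ⁻¹' E := by
      ext t; simp [hN, and_assoc]
    rw [hNe]
    exact (measurableSet_Ioo.inter
      ((measurable_deriv φ) (measurableSet_singleton 0).compl)).inter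
      (hE.preimage hφm.measurable)
  -- the countable family of "good" rational intervals
  set Good : ℚ × ℚ → Prop := fun pq =>
    Set.Icc (pq.1 : ℝ) (pq.2 : ℝ) ⊆ Set.Ioo a b ∧
      ∀ s ∈ Set.Icc (pq.1 : ℝ) (pq.2 : ℝ), deriv φ s ≠ 0 with hGood
  set K : ℚ × ℚ → Set ℝ := fun pq =>
    if Good pq then N ∩ Set.Icc (pq.1 : ℝ) (pq.2 : ℝ) else ∅ with hK
  have hcover : N ⊆ ⋃ pq : ℚ × ℚ, K pq := by
    intro t ht
    obtain ⟨htI, htd, htE⟩ := ht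
    have hct : ContinuousAt (deriv φ) t :=
      (hcont t htI).continuousAt (Ioo_mem_nhds htI.1 htI.2)
    have hne : ∀ᶠ s in nhds t, deriv φ s ≠ 0 := hct.eventually_ne htd
    have hmem : {s | deriv φ s ≠ 0} ∩ Set.Ioo a b ∈ nhds t :=
      Filter.inter_mem hne (Ioo_mem_nhds htI.1 htI.2)
    obtain ⟨ε, hε, hball⟩ := Metric.mem_nhds_iff.mp hmem
    obtain ⟨p, hp1, hp2⟩ := exists_rat_btwn (show t - ε < t by linarith)
    obtain ⟨q, hq1, hq2⟩ := exists_rat_btwn (show t < t + ε by linarith)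
    have hsub : Set.Icc (p : ℝ) (q : ℝ) ⊆ {s | deriv φ s ≠ 0} ∩ Set.Ioo a b := by
      intro s hs
      apply hball
      rw [Metric.mem_ball, Real.dist_eq, abs_lt]
      constructor <;> [nlinarith [hs.1, hs.2]; nlinarith [hs.1, hs.2]]
    have hG : Good (p, q) :=
      ⟨fun s hs => (hsub hs).2, fun s hs => (hsub hs).1⟩
    refine Set.mem_iUnion.mpr ⟨(p, q), ?_⟩
    have hKeq : K (p, q) = N ∩ Set.Icc ((p : ℝ)) ((q : ℝ)) := by
      rw [hK]; exact if_pos hG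
    rw [hKeq]
    exact ⟨⟨htI, htd, htE⟩, ⟨le_of_lt hp2, le_of_lt hq1⟩⟩
  refine measure_mono_null hcover (measure_iUnion_null fun pq => ?_)
  by_cases hG : Good pq
  swap
  · have hKeq : K pq = ∅ := by rw [hK]; exact if_neg hG
    simp [hKeq]
  have hKeq : K pq = N ∩ Set.Icc ((pq.1 : ℝ)) ((pq.2 : ℝ)) := by
    rw [hK]; exact if_pos hG
  rw [hKeq]
  obtain ⟨hsub, hnz⟩ := hG
  set p : ℝ := (pq.1 : ℝ)
  set q : ℝ := (pq.2 : ℝ)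
  -- φ is injective on Icc p q
  have hco : ContinuousOn φ (Set.Icc p q) := fun s hs =>
    ((hdiff s (hsub hs)).differentiableAt.continuousAt).continuousWithinAt
  have hcd : ContinuousOn (deriv φ) (Set.Icc p q) := hcont.mono hsub
  have hinj : Set.InjOn φ (Set.Icc p q) := by
    rcases le_or_gt p q with hpq | hpq
    · by_cases hpos : ∀ x ∈ Set.Icc p q, 0 < deriv φ x
      · exact (strictMonoOn_of_deriv_pos (convex_Icc p q) hco
          (fun x hx => hpos x (interior_subset hx))).injOn
      · push_neg at hpos
        obtain ⟨x, hx, hxle⟩ := hpos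
        have hxneg : deriv φ x < 0 := lt_of_le_of_ne hxle (hnz x hx)
        have hneg : ∀ y ∈ Set.Icc p q, deriv φ y < 0 := by
          intro y hy
          by_contra hyc
          push_neg at hyc
          have hypos : 0 < deriv φ y := lt_of_le_of_ne hyc (Ne.symm (hnz y hy))
          have h0 : (0 : ℝ) ∈ Set.uIcc (deriv φ x) (deriv φ y) :=
            Set.mem_uIcc.mpr (Or.inl ⟨le_of_lt hxneg, le_of_lt hypos⟩)
          have hx' : x ∈ Set.uIcc p q := by rw [Set.uIcc_of_le hpq]; exact hx
          have hy' : y ∈ Set.uIcc p q := by rw [Set.uIcc_of_le hpq]; exact hy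
          have huIcc : Set.uIcc x y ⊆ Set.Icc p q := by
            rw [← Set.uIcc_of_le hpq]
            exact Set.uIcc_subset_uIcc hx' hy'
          obtain ⟨z, hz, hz0⟩ := intermediate_value_uIcc (hcd.mono huIcc) h0
          exact hnz z (huIcc hz) hz0
        exact (strictAntiOn_of_deriv_neg (convex_Icc p q) hco
          (fun x hx => hneg x (interior_subset hx))).injOn
    · intro x hx y hy _
      exact absurd (hx.1.trans hx.2) (not_le.mpr hpq)
  set s : Set ℝ := N ∩ Set.Icc p q with hs
  have hsmeas : MeasurableSet s := hNmeas.inter measurableSet_Icc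
  have hsIcc : s ⊆ Set.Icc p q := Set.inter_subset_right
  have hf' : ∀ x ∈ s, HasFDerivWithinAt φ
      ((1 : ℝ →L[ℝ] ℝ).smulRight (deriv φ x)) s x := fun x hx =>
    ((hdiff x (hsub hx.2)).hasFDerivAt.hasFDerivWithinAt)
  have himg : φ '' s ⊆ E := by
    rintro _ ⟨x, hx, rfl⟩
    exact hx.1.2.2
  have hineq := MeasureTheory.lintegral_abs_det_fderiv_le_addHaar_image volume hsmeas
    hf' (hinj.mono hsIcc)
  rw [show (fun x => ENNReal.ofReal |((1 : ℝ →L[ℝ] ℝ).smulRight (deriv φ x)).det|)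
        = fun x => ENNReal.ofReal |deriv φ x| from by
      funext x; rw [ContinuousLinearMap.smulRight_one_eq_toSpanSingleton, ContinuousLinearMap.det_toSpanSingleton]] at hineq
  have himg0 : volume (φ '' s) = 0 := measure_mono_null himg hE0
  rw [himg0, le_zero_iff] at hineq
  have hfmeas : Measurable fun x => ENNReal.ofReal |deriv φ x| :=
    ENNReal.measurable_ofReal.comp (measurable_deriv φ).abs
  have hae := (setLIntegral_eq_zero_iff hsmeas hfmeas).mp hineq
  rw [ae_iff] at hae
  refine measure_mono_null (fun x hx => ?_) hae
  simp only [Set.mem_setOf_eq, Classical.not_imp]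
  refine ⟨hx, ?_⟩
  have hdx : deriv φ x ≠ 0 := hnz x (hsIcc hx)
  simpa [ENNReal.ofReal_eq_zero, not_le, abs_pos] using hdx


open Set Filter Complex Real in
/-- Oscillatory decay for a nonnegative integrable weight against a phase whose
critical set is null. -/
lemma rl_key (a b : ℝ) (φ : ℝ → ℝ) (hφm : Continuous φ)
    (hdiff : ∀ t ∈ Set.Ioo a b, HasDerivAt φ (deriv φ t) t)
    (hcont : ContinuousOn (deriv φ) (Set.Ioo a b))
    (hcrit' : volume {t ∈ Set.Ioo a b | deriv φ t = 0} = 0)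
    (w : ℝ → ℝ) (hw : IntegrableOn w (Set.Ioo a b)) (h0 : ∀ t, 0 ≤ w t) :
    Filter.Tendsto
      (fun τ : ℝ => ∫ t in Set.Ioo a b, (w t : ℂ) * Complex.exp (Complex.I * τ * φ t))
      Filter.atTop (nhds 0) := by
  set μ0 : Measure ℝ :=
    (volume.restrict (Set.Ioo a b)).withDensity (fun t => ENNReal.ofReal (w t)) with hμ0
  have hfin : IsFiniteMeasure μ0 := by
    constructor
    rw [hμ0, withDensity_apply _ MeasurableSet.univ, Measure.restrict_univ]
    have : ∀ t, ENNReal.ofReal (w t) ≤ (‖w t‖₊ : ENNReal) := fun t => by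
      rw [← enorm_eq_nnnorm, Real.enorm_eq_ofReal (h0 t)]
    exact lt_of_le_of_lt (lintegral_mono this) hw.2
  set ν : Measure ℝ := μ0.map φ with hν
  have hνfin : IsFiniteMeasure ν := by
    constructor
    rw [hν, Measure.map_apply hφm.measurable MeasurableSet.univ]
    exact measure_lt_top μ0 _
  have hac : ν ≪ volume := by
    refine Measure.AbsolutelyContinuous.mk fun E hE hE0 => ?_
    rw [hν, Measure.map_apply hφm.measurable hE, hμ0,
      withDensity_apply _ (hE.preimage hφm.measurable),
      Measure.restrict_restrict (hE.preimage hφm.measurable)]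
    have hnull : volume (φ ⁻¹' E ∩ Set.Ioo a b) = 0 := by
      have hsub : φ ⁻¹' E ∩ Set.Ioo a b ⊆
          {t ∈ Set.Ioo a b | deriv φ t = 0} ∪
          {t ∈ Set.Ioo a b | deriv φ t ≠ 0 ∧ φ t ∈ E} := by
        rintro t ⟨htE, htI⟩
        by_cases hd : deriv φ t = 0
        · exact Or.inl ⟨htI, hd⟩
        · exact Or.inr ⟨htI, hd, htE⟩
      exact measure_mono_null hsub (measure_union_null hcrit'
        (rl_null_preimage a b φ hφm hdiff hcont E hE hE0))
    rw [Measure.restrict_eq_zero.mpr hnull]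
    simp
  have hrn : volume.withDensity (ν.rnDeriv volume) = ν :=
    Measure.withDensity_rnDeriv_eq ν volume hac
  set f : ℝ → ℝ := fun s => (ν.rnDeriv volume s).toReal with hf
  have hfi : Integrable f := Measure.integrable_toReal_rnDeriv
  -- the key identity
  have hkey : ∀ τ : ℝ, ∫ t in Set.Ioo a b, (w t : ℂ) * Complex.exp (Complex.I * τ * φ t)
      = ∫ s, (f s : ℂ) * Complex.exp (Complex.I * τ * s) := by
    intro τ
    have hwm : AEMeasurable (fun t => (w t).toNNReal) (volume.restrict (Set.Ioo a b)) :=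
      measurable_real_toNNReal.comp_aemeasurable hw.aemeasurable
    have e1 : ∫ t in Set.Ioo a b, (w t : ℂ) * Complex.exp (Complex.I * τ * φ t)
        = ∫ t, Complex.exp (Complex.I * τ * φ t) ∂μ0 := by
      rw [hμ0]
      rw [show (fun t => ENNReal.ofReal (w t)) = fun t => ((w t).toNNReal : ENNReal) from rfl]
      rw [integral_withDensity_eq_integral_smul₀ hwm]
      refine setIntegral_congr_fun measurableSet_Ioo fun t _ => ?_
      rw [NNReal.smul_def, Real.coe_toNNReal _ (h0 t), Complex.real_smul]
    have hexpc : Continuous fun s : ℝ => Complex.exp (Complex.I * τ * s) := by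
      fun_prop
    have e2 : ∫ t, Complex.exp (Complex.I * τ * φ t) ∂μ0
        = ∫ s, Complex.exp (Complex.I * τ * s) ∂ν := by
      rw [hν, integral_map hφm.aemeasurable hexpc.aestronglyMeasurable]
    have e3 : ∫ s, Complex.exp (Complex.I * τ * s) ∂ν
        = ∫ s, (f s : ℂ) * Complex.exp (Complex.I * τ * s) := by
      rw [← hrn]
      have hcongr : volume.withDensity (ν.rnDeriv volume)
          = volume.withDensity (fun s => (((ν.rnDeriv volume s).toNNReal : ℝ≥0) : ℝ≥0∞)) := by
        refine withDensity_congr_ae ?_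
        filter_upwards [Measure.rnDeriv_lt_top ν volume] with s hs
        rw [ENNReal.coe_toNNReal hs.ne]
      rw [hcongr, integral_withDensity_eq_integral_smul
        (Measure.measurable_rnDeriv ν volume).ennreal_toNNReal]
      refine integral_congr_ae (Filter.Eventually.of_forall fun s => ?_)
      show (ν.rnDeriv volume s).toNNReal • Complex.exp (Complex.I * τ * s)
        = (f s : ℂ) * Complex.exp (Complex.I * τ * s)
      rw [NNReal.smul_def, Complex.real_smul]
      rfl
    rw [e1, e2, e3]
  rw [show (fun τ : ℝ => ∫ t in Set.Ioo a b, (w t : ℂ) * Complex.exp (Complex.I * τ * φ t))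
    = fun τ : ℝ => ∫ s, (f s : ℂ) * Complex.exp (Complex.I * τ * s) from funext hkey]
  -- Riemann–Lebesgue
  have RL := Real.tendsto_integral_exp_smul_cocompact (fun s => (f s : ℂ))
  have hmap : Filter.Tendsto (fun τ : ℝ => -τ / (2 * π)) Filter.atTop (Filter.cocompact ℝ) := by
    have h2 : Filter.Tendsto (fun τ : ℝ => τ / (2 * π)) Filter.atTop Filter.atTop :=
      Filter.tendsto_id.atTop_div_const (by positivity)
    have h1 : Filter.Tendsto (fun τ : ℝ => -τ / (2 * π)) Filter.atTop Filter.atBot := by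
      have := tendsto_neg_atTop_atBot.comp h2
      refine this.congr fun τ => ?_
      simp [Function.comp, neg_div]
    exact h1.mono_right (by rw [cocompact_eq_atBot_atTop]; exact le_sup_left)
  have := RL.comp hmap
  refine this.congr fun τ => ?_
  refine integral_congr_ae (Filter.Eventually.of_forall fun v => ?_)
  show Real.fourierChar (-(v * (-τ / (2 * π)))) • ((f v : ℂ))
      = (f v : ℂ) * Complex.exp (Complex.I * τ * v)
  rw [Circle.smul_def, Real.fourierChar_apply]
  have harg : 2 * π * -(v * (-τ / (2 * π))) = v * τ := by
    field_simp
  rw [harg]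
  rw [show ((v * τ : ℝ) : ℂ) * Complex.I = Complex.I * τ * v by push_cast; ring]
  rw [smul_eq_mul]; ring

/-- a generalized Riemann–Lebesgue lemma. If `ψ ∈ C¹([a,b])` is real-valued
and the set of its critical points in `[a,b]` has Lebesgue measure zero, then for every
`g ∈ L¹(a,b)` the oscillatory integral `∫_a^b g(t) e^{iτψ(t)} dt` tends to `0` as
`τ → +∞`. -/
theorem statement8 (a b : ℝ) (hab : a < b) (ψ : ℝ → ℝ)
    (hψ : ContDiffOn ℝ 1 ψ (Set.Icc a b))
    (hcrit : volume {t ∈ Set.Icc a b | derivWithin ψ (Set.Icc a b) t = 0} = 0)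
    (g : ℝ → ℂ) (hg : IntegrableOn g (Set.Ioo a b)) :
    Filter.Tendsto
      (fun τ : ℝ => ∫ t in Set.Ioo a b, g t * Complex.exp (Complex.I * τ * ψ t))
      Filter.atTop (nhds 0) := by
  -- the clamped extension of ψ
  set φ : ℝ → ℝ := fun t => ψ (max a (min b t)) with hφ
  have hclamp : ∀ t, max a (min b t) ∈ Set.Icc a b := fun t =>
    ⟨le_max_left _ _, max_le (le_of_lt hab) (min_le_left _ _)⟩
  have hφm : Continuous φ := by
    refine hψ.continuousOn.comp_continuous ?_ hclamp
    exact continuous_const.max (continuous_const.min continuous_id)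
  have hEqOn : ∀ t ∈ Set.Icc a b, φ t = ψ t := by
    intro t ht
    simp [hφ, min_eq_right ht.2, max_eq_right ht.1]
  have hud : UniqueDiffOn ℝ (Set.Icc a b) := uniqueDiffOn_Icc hab
  have hderiv : ∀ t ∈ Set.Ioo a b,
      HasDerivAt φ (derivWithin ψ (Set.Icc a b) t) t := by
    intro t ht
    have htIcc : t ∈ Set.Icc a b := Set.Ioo_subset_Icc_self ht
    have hdw : HasDerivWithinAt ψ (derivWithin ψ (Set.Icc a b) t) (Set.Icc a b) t :=
      ((hψ.differentiableOn one_ne_zero) t htIcc).hasDerivWithinAt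
    have hda : HasDerivAt ψ (derivWithin ψ (Set.Icc a b) t) t :=
      hdw.hasDerivAt (Icc_mem_nhds ht.1 ht.2)
    refine hda.congr_of_eventuallyEq ?_
    filter_upwards [Ioo_mem_nhds ht.1 ht.2] with s hs
    exact hEqOn s (Set.Ioo_subset_Icc_self hs)
  have hderiveq : ∀ t ∈ Set.Ioo a b, deriv φ t = derivWithin ψ (Set.Icc a b) t :=
    fun t ht => (hderiv t ht).deriv
  have hdiff : ∀ t ∈ Set.Ioo a b, HasDerivAt φ (deriv φ t) t := by
    intro t ht
    rw [hderiveq t ht]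
    exact hderiv t ht
  have hcont : ContinuousOn (deriv φ) (Set.Ioo a b) := by
    have h1 : ContinuousOn (derivWithin ψ (Set.Icc a b)) (Set.Icc a b) :=
      (hψ.continuousOn_derivWithin hud le_rfl)
    exact (h1.mono Set.Ioo_subset_Icc_self).congr hderiveq
  have hcrit' : volume {t ∈ Set.Ioo a b | deriv φ t = 0} = 0 := by
    refine measure_mono_null (fun t ht => ?_) hcrit
    exact ⟨Set.Ioo_subset_Icc_self ht.1, (hderiveq t ht.1) ▸ ht.2⟩
  -- the four nonnegative parts of g
  set w1 : ℝ → ℝ := fun t => max ((g t).re) 0 with hw1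
  set w2 : ℝ → ℝ := fun t => max (-(g t).re) 0 with hw2
  set w3 : ℝ → ℝ := fun t => max ((g t).im) 0 with hw3
  set w4 : ℝ → ℝ := fun t => max (-(g t).im) 0 with hw4
  have hi1 : IntegrableOn w1 (Set.Ioo a b) := hg.re.pos_part
  have hi2 : IntegrableOn w2 (Set.Ioo a b) := hg.re.neg.pos_part
  have hi3 : IntegrableOn w3 (Set.Ioo a b) := hg.im.pos_part
  have hi4 : IntegrableOn w4 (Set.Ioo a b) := hg.im.neg.pos_part
  have k1 := rl_key a b φ hφm hdiff hcont hcrit' w1 hi1 fun t => le_max_right _ _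
  have k2 := rl_key a b φ hφm hdiff hcont hcrit' w2 hi2 fun t => le_max_right _ _
  have k3 := rl_key a b φ hφm hdiff hcont hcrit' w3 hi3 fun t => le_max_right _ _
  have k4 := rl_key a b φ hφm hdiff hcont hcrit' w4 hi4 fun t => le_max_right _ _
  -- combine
  have hcomb : Filter.Tendsto
      (fun τ : ℝ => ∫ t in Set.Ioo a b, g t * Complex.exp (Complex.I * τ * φ t))
      Filter.atTop (nhds 0) := by
    have htend := ((k1.sub k2).add ((k3.sub k4).const_mul Complex.I))
    rw [show ((0 : ℂ) - 0 + Complex.I * (0 - 0)) = 0 by ring] at htend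
    refine htend.congr fun τ => ?_
    symm
    -- integrability of each piece
    have hexpm : AEStronglyMeasurable (fun t => Complex.exp (Complex.I * τ * φ t))
        (volume.restrict (Set.Ioo a b)) := by
      apply Continuous.aestronglyMeasurable
      fun_prop
    have hexp1 : ∀ t : ℝ, ‖Complex.exp (Complex.I * τ * φ t)‖ = 1 := by
      intro t
      rw [Complex.norm_exp]
      have : (Complex.I * τ * (φ t : ℂ)).re = 0 := by simp
      rw [this, Real.exp_zero]
    have hint : ∀ (u : ℝ → ℝ), IntegrableOn u (Set.Ioo a b) →
        Integrable (fun t => (u t : ℂ) * Complex.exp (Complex.I * τ * φ t))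
          (volume.restrict (Set.Ioo a b)) := by
      intro u hu
      refine Integrable.mono' hu.norm
        ((Complex.continuous_ofReal.comp_aestronglyMeasurable hu.aestronglyMeasurable).mul hexpm) ?_
      refine Filter.Eventually.of_forall fun t => ?_
      rw [norm_mul, hexp1 t]
      simp
    have e1 := hint w1 hi1
    have e2 := hint w2 hi2
    have e3 := hint w3 hi3
    have e4 := hint w4 hi4
    have hptwise : ∀ t : ℝ, g t * Complex.exp (Complex.I * τ * φ t)
        = ((w1 t : ℂ) * Complex.exp (Complex.I * τ * φ t)
            - (w2 t : ℂ) * Complex.exp (Complex.I * τ * φ t))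
          + Complex.I * ((w3 t : ℂ) * Complex.exp (Complex.I * τ * φ t)
            - (w4 t : ℂ) * Complex.exp (Complex.I * τ * φ t)) := by
      intro t
      have hre : w1 t - w2 t = (g t).re := by
        simp [hw1, hw2, max_zero_sub_max_neg_zero_eq_self]
      have him : w3 t - w4 t = (g t).im := by
        simp [hw3, hw4, max_zero_sub_max_neg_zero_eq_self]
      have hgt : g t = ((g t).re : ℂ) + ((g t).im : ℂ) * Complex.I :=
        (Complex.re_add_im (g t)).symm
      rw [hgt, ← hre, ← him]
      push_cast
      ring
    calc ∫ t in Set.Ioo a b, g t * Complex.exp (Complex.I * τ * φ t)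
        = ∫ t in Set.Ioo a b,
            (((w1 t : ℂ) * Complex.exp (Complex.I * τ * φ t)
              - (w2 t : ℂ) * Complex.exp (Complex.I * τ * φ t))
            + Complex.I * ((w3 t : ℂ) * Complex.exp (Complex.I * τ * φ t)
              - (w4 t : ℂ) * Complex.exp (Complex.I * τ * φ t))) := by
          exact integral_congr_ae (Filter.Eventually.of_forall fun t => hptwise t)
      _ = ((∫ t in Set.Ioo a b, (w1 t : ℂ) * Complex.exp (Complex.I * τ * φ t))
            - ∫ t in Set.Ioo a b, (w2 t : ℂ) * Complex.exp (Complex.I * τ * φ t))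
          + Complex.I * ((∫ t in Set.Ioo a b, (w3 t : ℂ) * Complex.exp (Complex.I * τ * φ t))
            - ∫ t in Set.Ioo a b, (w4 t : ℂ) * Complex.exp (Complex.I * τ * φ t)) := by
          have hA : Integrable (fun t =>
              (w1 t : ℂ) * Complex.exp (Complex.I * τ * φ t)
                - (w2 t : ℂ) * Complex.exp (Complex.I * τ * φ t))
              (volume.restrict (Set.Ioo a b)) := e1.sub e2
          have hB : Integrable (fun t =>
              Complex.I * ((w3 t : ℂ) * Complex.exp (Complex.I * τ * φ t)
                - (w4 t : ℂ) * Complex.exp (Complex.I * τ * φ t)))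
              (volume.restrict (Set.Ioo a b)) := (e3.sub e4).const_mul Complex.I
          rw [integral_add hA hB, integral_sub e1 e2, integral_const_mul,
            integral_sub e3 e4]
  refine hcomb.congr fun τ => ?_
  refine setIntegral_congr_fun measurableSet_Ioo fun t ht => ?_
  rw [hEqOn t (Set.Ioo_subset_Icc_self ht)]
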